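/- arXiv:2510.22270 — 4 statements merged into one kernel-verified Lean document; each statement's English description precedes it below -/
import Mathlib

section
/- Let M be a compact embedded submanifold of ℝⁿ with geodesic curvature bounded by κ_g, let D = (2-√2)/κ_g, and fix X ∈ M. If Y ∈ Exp_X(B(0_X, D)) (i.e., Y is connected to X by a geodesic of length at most D), then for every normal vector w ∈ N_X M one has ⟨w, Y - X⟩ ≤ κ_g ‖w‖ ‖Y - X‖². -/
/-!
Since `w` is normal to the initial velocity `v = γ' 0`, only the second-order Taylor remainder
`Y - X - v` contributes to `⟪w, Y - X⟫`, and the curvature bound makes that remainder at most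
`κ_g d²/2`. The same remainder estimate shows the chord is not much shorter than the geodesic:
`‖Y - X‖ ≥ d (1 - κ_g d / 2) ≥ d / √2` as long as `κ_g d ≤ 2 - √2`, so `κ_g d²/2 ≤ κ_g ‖Y - X‖²`.
-/

open Set
local notation "⟪" x ", " y "⟫_ℝ" => @inner ℝ _ _ x y

section Taylor

variable {E : Type*} [NormedAddCommGroup E] [NormedSpace ℝ E]
  {f f' f'' : ℝ → E} {a b C : ℝ}

theorem norm_sub_sub_smul_le_of_norm_deriv2_le (hab : a ≤ b)
    (hf : ∀ t ∈ Icc a b, HasDerivWithinAt f (f' t) (Icc a b) t)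
    (hf' : ∀ t ∈ Icc a b, HasDerivWithinAt f' (f'' t) (Icc a b) t)
    (hC : ∀ t ∈ Icc a b, ‖f'' t‖ ≤ C) :
    ‖f b - f a - (b - a) • f' a‖ ≤ C * (b - a) ^ 2 / 2 := by
  have hf'_lip : ∀ t ∈ Icc a b, ‖f' t - f' a‖ ≤ C * (t - a) :=
    norm_image_sub_le_of_norm_deriv_le_segment' hf' fun t ht => hC t (Ico_subset_Icc_self ht)
  have hremainder : ∀ t ∈ Icc a b,
      HasDerivWithinAt (fun s => f s - f a - (s - a) • f' a) (f' t - f' a) (Icc a b) t := by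
    intro t ht
    have hlinear : HasDerivAt (fun s => (s - a) • f' a) (f' a) t := by
      simpa using ((hasDerivAt_id' t).sub_const a).smul_const (f' a)
    exact ((hf t ht).sub_const (f a)).sub hlinear.hasDerivWithinAt
  refine image_norm_le_of_norm_deriv_right_le_deriv_boundary
    (B := fun t => C * (t - a) ^ 2 / 2) (B' := fun t => C * (t - a))
    (fun t ht => (hremainder t ht).continuousWithinAt)
    (fun t ht => (hremainder t (Ico_subset_Icc_self ht)).mono_of_mem_nhdsWithin
      (Icc_mem_nhdsGE_of_mem ht))
    (by simp) (fun t => ?_) (fun t ht => hf'_lip t (Ico_subset_Icc_self ht))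
    (right_mem_Icc.2 hab)
  exact ((((hasDerivAt_id' t).sub_const a).fun_pow 2).const_mul C |>.div_const 2).congr_deriv
    (by norm_num; ring)

end Taylor

theorem sq_div_two_le_sq_of_le_add {κ L r : ℝ} (hL : 0 ≤ L) (hκL : κ * L ≤ 2 - √2)
    (h : L ≤ r + κ * L ^ 2 / 2) : L ^ 2 / 2 ≤ r ^ 2 := by
  have hs : √2 ^ 2 = 2 := Real.sq_sqrt zero_le_two
  have hr : L * (√2 / 2) ≤ r := by nlinarith
  nlinarith [mul_nonneg hL (Real.sqrt_nonneg 2)]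

theorem normal_vector_inequality_local_general
    {n : ℕ} (κg : ℝ) (hκ : 0 < κg) (X Y : EuclideanSpace ℝ (Fin n))
    (dM : ℝ) (hdM : 0 ≤ dM) (hD : dM ≤ (2 - Real.sqrt 2) / κg)
    (γ γ' γ'' : ℝ → EuclideanSpace ℝ (Fin n))
    (hγ0 : γ 0 = X) (hγ1 : γ 1 = Y)
    (hder1 : ∀ t ∈ Icc (0:ℝ) 1, HasDerivAt γ (γ' t) t)
    (hder2 : ∀ t ∈ Icc (0:ℝ) 1, HasDerivAt γ' (γ'' t) t)
    (hspeed : ∀ t ∈ Icc (0:ℝ) 1, ‖γ' t‖ = dM)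
    (hcurv : ∀ t ∈ Icc (0:ℝ) 1, ‖γ'' t‖ ≤ κg * ‖γ' t‖ ^ 2)
    (w : EuclideanSpace ℝ (Fin n)) (hw : ⟪w, γ' 0⟫_ℝ = 0) :
    ⟪w, Y - X⟫_ℝ ≤ κg * ‖w‖ * ‖Y - X‖ ^ 2 := by
  have hκdM : κg * dM ≤ 2 - √2 := (le_div_iff₀' hκ).1 hD
  have hremainder : ‖Y - X - γ' 0‖ ≤ κg * dM ^ 2 / 2 := by
    simpa [hγ0, hγ1] using norm_sub_sub_smul_le_of_norm_deriv2_le zero_le_one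
      (fun t ht => (hder1 t ht).hasDerivWithinAt) (fun t ht => (hder2 t ht).hasDerivWithinAt)
      (fun t ht => (hcurv t ht).trans_eq (by rw [hspeed t ht]))
  have hnormal : ⟪w, Y - X⟫_ℝ ≤ ‖w‖ * (κg * dM ^ 2 / 2) :=
    calc ⟪w, Y - X⟫_ℝ = ⟪w, Y - X - γ' 0⟫_ℝ := by rw [inner_sub_right _ (Y - X), hw, sub_zero]
      _ ≤ ‖w‖ * ‖Y - X - γ' 0‖ := real_inner_le_norm _ _
      _ ≤ ‖w‖ * (κg * dM ^ 2 / 2) := by gcongr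
  have hchord : dM ≤ ‖Y - X‖ + κg * dM ^ 2 / 2 := by
    have := norm_le_norm_add_norm_sub (Y - X) (γ' 0)
    rw [hspeed 0 (left_mem_Icc.2 zero_le_one)] at this
    linarith
  calc ⟪w, Y - X⟫_ℝ ≤ κg * ‖w‖ * (dM ^ 2 / 2) := by linarith
    _ ≤ κg * ‖w‖ * ‖Y - X‖ ^ 2 := by
      gcongr
      exact sq_div_two_le_sq_of_le_add hdM hκdM hchord

/-- normal vector inequality, local form: with geodesic
curvature bounded by `κ_g` and `D = (2-√2)/κ_g`, if `Y = Exp_X(η)` for a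
tangent vector of length `d_M(X,Y) ≤ D` (i.e. `X` and `Y` are joined by a
constant-speed geodesic of length at most `D`), then for every normal vector
`w ∈ N_X M` one has `⟪w, Y - X⟫ ≤ κ_g ‖w‖ ‖Y - X‖²`. -/
theorem normal_vector_inequality_local
    {n : ℕ} (M : Set (EuclideanSpace ℝ (Fin n))) (hM : IsCompact M)
    (κg : ℝ) (hκ : 0 < κg)
    (X Y : EuclideanSpace ℝ (Fin n)) (hX : X ∈ M) (hY : Y ∈ M)
    (dM : ℝ) (hdM : 0 ≤ dM) (hD : dM ≤ (2 - Real.sqrt 2) / κg)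
    (γ γ' γ'' : ℝ → EuclideanSpace ℝ (Fin n))
    (hγM : ∀ t ∈ Icc (0:ℝ) 1, γ t ∈ M)
    (hγ0 : γ 0 = X) (hγ1 : γ 1 = Y)
    (hder1 : ∀ t ∈ Icc (0:ℝ) 1, HasDerivAt γ (γ' t) t)
    (hder2 : ∀ t ∈ Icc (0:ℝ) 1, HasDerivAt γ' (γ'' t) t)
    (hspeed : ∀ t ∈ Icc (0:ℝ) 1, ‖γ' t‖ = dM)
    (hcurv : ∀ t ∈ Icc (0:ℝ) 1, ‖γ'' t‖ ≤ κg * ‖γ' t‖ ^ 2)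
    (w : EuclideanSpace ℝ (Fin n)) (hw : ⟪w, γ' 0⟫_ℝ = 0) :
    ⟪w, Y - X⟫_ℝ ≤ κg * ‖w‖ * ‖Y - X‖ ^ 2 :=
  normal_vector_inequality_local_general κg hκ X Y dM hdM hD γ γ' γ'' hγ0 hγ1 hder1 hder2 hspeed
    hcurv w hw
end

section
/- Under the bound ‖Y - X - η(0)‖ ≤ (κ_g/2)‖η(0)‖² for the endpoints of a geodesic γ from X to Y with initial velocity η(0), if additionally the geodesic length ‖η(0)‖ = d_M(X,Y) ≤ (2-√2)/κ_g, then ‖Y - X‖ ≥ (1/√2)‖η(0)‖, i.e. the Euclidean chord length is at least 1/√2 times the Riemannian distance. -/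
/-- if the endpoints `X`, `Y` of a geodesic with initial velocity
`η₀` satisfy the chord bound `‖Y - X - η₀‖ ≤ (κ_g/2)‖η₀‖²`, and the geodesic
length satisfies `‖η₀‖ = d_M(X,Y) ≤ (2-√2)/κ_g`, then the Euclidean chord
length is at least `1/√2` times the Riemannian distance:
`‖Y - X‖ ≥ ‖η₀‖/√2`. -/
theorem chord_length_lower_bound
    {n : ℕ} (κg : ℝ) (hκ : 0 < κg)
    (X Y η₀ : EuclideanSpace ℝ (Fin n))
    (hchord : ‖Y - X - η₀‖ ≤ κg / 2 * ‖η₀‖ ^ 2)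
    (hlen : ‖η₀‖ ≤ (2 - Real.sqrt 2) / κg) :
    ‖Y - X‖ ≥ ‖η₀‖ / Real.sqrt 2 := by
  have h2 : Real.sqrt 2 > 0 := Real.sqrt_pos.mpr (by norm_num)
  have hsq : Real.sqrt 2 ^ 2 = 2 := Real.sq_sqrt (by norm_num)
  have htri : ‖η₀‖ - ‖Y - X - η₀‖ ≤ ‖Y - X‖ := by
    have := norm_sub_norm_le η₀ (Y - X)
    have h' : η₀ - (Y - X) = -(Y - X - η₀) := by abel
    rw [h'] at this
    simp only [norm_neg] at this
    linarith [abs_le.mp (le_refl |‖η₀‖ - ‖Y - X‖|) , le_abs_self (‖η₀‖ - ‖Y - X‖), this]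
  have hη : 0 ≤ ‖η₀‖ := norm_nonneg _
  have hlen' : κg * ‖η₀‖ ≤ 2 - Real.sqrt 2 := by
    rw [le_div_iff₀ hκ] at hlen; nlinarith
  have key : ‖η₀‖ - κg / 2 * ‖η₀‖ ^ 2 ≥ ‖η₀‖ / Real.sqrt 2 := by
    rw [ge_iff_le, div_le_iff₀ h2]
    nlinarith [mul_le_mul_of_nonneg_right hlen' hη, sq_nonneg (Real.sqrt 2 - 1)]
  linarith
end

section
/- Let φ : ℝⁿ → ℝ be L-Lipschitz continuous and ρ-weakly convex (i.e., φ + (ρ/2)‖·‖² is convex), and let M ⊂ ℝⁿ be an embedded submanifold with geodesic curvature bounded by κ_g. Fix X ∈ M and let g_X ∈ ∂_R φ(X) := P_{T_X M}(∂φ(X)) be a Riemannian subgradient. Then for all Y ∈ M with d_M(X,Y) ≤ (2-√2)/κ_g: φ(Y) ≥ φ(X) + ⟨g_X, Y - X⟩ - ((ρ + 2κ_g L)/2)‖Y - X‖². -/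
local notation "⟪" x ", " y "⟫_ℝ" => @inner ℝ _ _ x y

/-!
Split the Euclidean subgradient as `G = g_X + w` with `w = G - g_X` normal to `M` at `X`.
Weak convexity gives `φ Y ≥ φ X + ⟪g_X, Y - X⟫ + ⟪w, Y - X⟫ - ρ/2 ‖Y - X‖²`, the curvature
bound gives `⟪w, Y - X⟫ ≥ -κ_g ‖w‖ ‖Y - X‖²`, and `‖w‖ ≤ ‖G‖ ≤ L` because moving from `X`
along `G` shows that a subgradient of an `L`-Lipschitz function has norm at most `L`.
-/

open Filter Topology

lemma le_of_forall_pos_le_add_mul {a b c : ℝ} (h : ∀ t > 0, a ≤ b + c * t) : a ≤ b := by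
  have hlim : Tendsto (fun t : ℝ => b + c * t) (𝓝[>] 0) (𝓝 b) := by
    have hcont : Continuous fun t : ℝ => b + c * t := by fun_prop
    simpa using (hcont.tendsto 0).mono_left nhdsWithin_le_nhds
  exact ge_of_tendsto hlim (eventually_nhdsWithin_of_forall h)

section ProximalSubgradient

variable {E : Type*} [NormedAddCommGroup E] [InnerProductSpace ℝ E]

/-- For a `ρ`-weakly convex `φ` these `g` are exactly the elements of `∂φ(x)`. -/
def IsProximalSubgradient (φ : E → ℝ) (ρ : ℝ) (x g : E) : Prop :=
  ∀ y, φ x + ⟪g, y - x⟫_ℝ - ρ / 2 * ‖y - x‖ ^ 2 ≤ φ y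

lemma isProximalSubgradient_of_subgradient_add_sq_norm {φ : E → ℝ} {ρ : ℝ} {x g : E}
    (h : ∀ y, φ x + ρ / 2 * ‖x‖ ^ 2 + ⟪g + ρ • x, y - x⟫_ℝ ≤ φ y + ρ / 2 * ‖y‖ ^ 2) :
    IsProximalSubgradient φ ρ x g := by
  intro y
  have hy : ‖y‖ ^ 2 = ‖x‖ ^ 2 + 2 * ⟪x, y - x⟫_ℝ + ‖y - x‖ ^ 2 := by
    rw [← norm_add_sq_real, add_sub_cancel]
  have := h y
  rw [inner_add_left, real_inner_smul_left, hy] at this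
  linarith

lemma IsProximalSubgradient.norm_le {φ : E → ℝ} {ρ L : ℝ} {x g : E}
    (hg : IsProximalSubgradient φ ρ x g) (hL : 0 ≤ L)
    (hlip : ∀ y, φ y - φ x ≤ L * ‖y - x‖) : ‖g‖ ≤ L := by
  have hsq : ‖g‖ ^ 2 ≤ L * ‖g‖ := by
    refine le_of_forall_pos_le_add_mul (c := ρ / 2 * ‖g‖ ^ 2) fun t ht => ?_
    have hstep : x + t • g - x = t • g := add_sub_cancel_left x _
    have hlow := hg (x + t • g)
    have hup := hlip (x + t • g)
    simp only [hstep, real_inner_smul_right, real_inner_self_eq_norm_sq, norm_smul,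
      Real.norm_of_nonneg ht.le] at hlow hup
    refine le_of_mul_le_mul_left ?_ ht
    linear_combination hlow + hup
  nlinarith [norm_nonneg g]

end ProximalSubgradient

theorem riemannian_subgradient_inequality_general
    {n : ℕ} (M : Set (EuclideanSpace ℝ (Fin n)))
    (κg L ρ : ℝ) (hκ : 0 < κg) (hL : 0 ≤ L)
    (φ : EuclideanSpace ℝ (Fin n) → ℝ)
    (hlip : ∀ a b, |φ a - φ b| ≤ L * ‖a - b‖)
    (X : EuclideanSpace ℝ (Fin n))
    (T : Submodule ℝ (EuclideanSpace ℝ (Fin n)))  -- tangent space `T_X M`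
    (dM : EuclideanSpace ℝ (Fin n) → EuclideanSpace ℝ (Fin n) → ℝ)
    (G : EuclideanSpace ℝ (Fin n))
    -- `G` is a Euclidean subgradient of `φ` at `X`
    (hG : ∀ y, φ y + ρ / 2 * ‖y‖ ^ 2 ≥
      φ X + ρ / 2 * ‖X‖ ^ 2 + ⟪G + ρ • X, y - X⟫_ℝ)
    (gX : EuclideanSpace ℝ (Fin n))
    (hgX : gX = (T.orthogonalProjection G : EuclideanSpace ℝ (Fin n)))
    -- normal vector inequality for the normal component `G - gX`
    (hnormal : ∀ Y ∈ M, dM X Y ≤ (2 - Real.sqrt 2) / κg →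
      -(κg * ‖G - gX‖ * ‖Y - X‖ ^ 2) ≤ ⟪G - gX, Y - X⟫_ℝ) :
    ∀ Y ∈ M, dM X Y ≤ (2 - Real.sqrt 2) / κg →
      φ Y ≥ φ X + ⟪gX, Y - X⟫_ℝ - (ρ + 2 * κg * L) / 2 * ‖Y - X‖ ^ 2 := by
  intro Y hY hd
  have hsub : IsProximalSubgradient φ ρ X G := isProximalSubgradient_of_subgradient_add_sq_norm hG
  have hw : ‖G - gX‖ ≤ L :=
    calc ‖G - gX‖ = ‖Tᗮ.starProjection G‖ := by
          rw [hgX, Submodule.starProjection_orthogonal_val]; rfl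
      _ ≤ ‖G‖ := Tᗮ.norm_starProjection_apply_le G
      _ ≤ L := hsub.norm_le hL fun y => (le_abs_self _).trans (hlip y X)
  have hcurv : κg * ‖G - gX‖ * ‖Y - X‖ ^ 2 ≤ κg * L * ‖Y - X‖ ^ 2 := by gcongr
  calc φ X + ⟪gX, Y - X⟫_ℝ - (ρ + 2 * κg * L) / 2 * ‖Y - X‖ ^ 2
      ≤ φ X + ⟪gX, Y - X⟫_ℝ + ⟪G - gX, Y - X⟫_ℝ - ρ / 2 * ‖Y - X‖ ^ 2 := by
        nlinarith [hnormal Y hY hd, mul_nonneg (mul_nonneg hκ.le hL) (sq_nonneg ‖Y - X‖)]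
    _ = φ X + ⟪G, Y - X⟫_ℝ - ρ / 2 * ‖Y - X‖ ^ 2 := by rw [inner_sub_left]; ring
    _ ≤ φ Y := hsub Y

/-- Riemannian subgradient inequality for weakly convex
functions: let `φ : ℝⁿ → ℝ` be `L`-Lipschitz and `ρ`-weakly convex, `M ⊂ ℝⁿ`
an embedded submanifold with tangent space `T` at `X ∈ M` and geodesic
curvature bounded by `κ_g` (expressed through the normal vector inequality for
the normal component `G - g_X` on the geodesic ball of radius `(2-√2)/κ_g`).
If `G ∈ ∂φ(X)` (Euclidean subgradient of the weakly convex function) and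
`g_X = P_{T_X M}(G) ∈ ∂_R φ(X)`, then for all `Y ∈ M` with
`d_M(X,Y) ≤ (2-√2)/κ_g`:
`φ(Y) ≥ φ(X) + ⟪g_X, Y - X⟫ - ((ρ + 2κ_g L)/2)‖Y - X‖²`. -/
theorem riemannian_subgradient_inequality
    {n : ℕ} (M : Set (EuclideanSpace ℝ (Fin n)))
    (κg L ρ : ℝ) (hκ : 0 < κg) (hL : 0 ≤ L) (hρ : 0 ≤ ρ)
    (φ : EuclideanSpace ℝ (Fin n) → ℝ)
    (hlip : ∀ a b, |φ a - φ b| ≤ L * ‖a - b‖)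
    (hwc : ConvexOn ℝ Set.univ (fun x => φ x + ρ / 2 * ‖x‖ ^ 2))
    (X : EuclideanSpace ℝ (Fin n)) (hX : X ∈ M)
    (T : Submodule ℝ (EuclideanSpace ℝ (Fin n)))  -- tangent space `T_X M`
    (dM : EuclideanSpace ℝ (Fin n) → EuclideanSpace ℝ (Fin n) → ℝ)
    (G : EuclideanSpace ℝ (Fin n))
    -- `G` is a Euclidean subgradient of `φ` at `X`
    (hG : ∀ y, φ y + ρ / 2 * ‖y‖ ^ 2 ≥
      φ X + ρ / 2 * ‖X‖ ^ 2 + ⟪G + ρ • X, y - X⟫_ℝ)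
    (gX : EuclideanSpace ℝ (Fin n))
    (hgX : gX = (T.orthogonalProjection G : EuclideanSpace ℝ (Fin n)))
    -- normal vector inequality for the normal component `G - gX`
    (hnormal : ∀ Y ∈ M, dM X Y ≤ (2 - Real.sqrt 2) / κg →
      -(κg * ‖G - gX‖ * ‖Y - X‖ ^ 2) ≤ ⟪G - gX, Y - X⟫_ℝ) :
    ∀ Y ∈ M, dM X Y ≤ (2 - Real.sqrt 2) / κg →
      φ Y ≥ φ X + ⟪gX, Y - X⟫_ℝ - (ρ + 2 * κg * L) / 2 * ‖Y - X‖ ^ 2 :=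
  riemannian_subgradient_inequality_general M κg L ρ hκ hL φ hlip X T dM G hG gX hgX hnormal
end

section
/- Let R_X : T_X M → M be a retraction on a compact embedded submanifold M ⊂ ℝⁿ (R_X(0)=X and DR_X(0) = id). Then there exist constants M₁, M₂ ≥ 0 such that for all X ∈ M and η ∈ T_X M: ‖R_X(η) - X‖ ≤ M₁‖η‖ and ‖R_X(η) - (X + η)‖ ≤ M₂‖η‖². -/
/-!
Taylor's theorem for `(X, η) ↦ R X η`, with its second derivative bounded on the compact set
`M × closedBall 0 1`, gives `‖R X η - X - η‖ ≤ C ‖η‖²` for `‖η‖ ≤ 1`; the linear term is `η`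
because `DR_X(0)` is the identity. For `‖η‖ > 1`, both `R X η` and `X` lie in `M`, so
`‖R X η - X‖ ≤ diam M`, and the triangle inequality gives both bounds.
-/

open Set Metric

section Taylor

variable {E F G : Type*} [NormedAddCommGroup E] [NormedSpace ℝ E] [NormedAddCommGroup F]
  [NormedSpace ℝ F] [NormedAddCommGroup G] [NormedSpace ℝ G]

theorem Convex.norm_image_sub_sub_fderiv_le_sq {f : E → G} {s : Set E} {C : ℝ}
    (hf : ContDiff ℝ 2 f) (hs : Convex ℝ s) (bound : ∀ z ∈ s, ‖fderiv ℝ (fderiv ℝ f) z‖ ≤ C)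
    {x y : E} (hx : x ∈ s) (hy : y ∈ s) :
    ‖f y - f x - fderiv ℝ f x (y - x)‖ ≤ C * ‖y - x‖ ^ 2 := by
  have hC : 0 ≤ C := (norm_nonneg (fderiv ℝ (fderiv ℝ f) x)).trans (bound x hx)
  have hf' : Differentiable ℝ (fderiv ℝ f) :=
    (hf.fderiv_right (m := 1) le_rfl).differentiable one_ne_zero
  have hderiv : ∀ z ∈ segment ℝ x y, ‖fderiv ℝ f z - fderiv ℝ f x‖ ≤ C * ‖y - x‖ :=
    fun z hz => calc
      ‖fderiv ℝ f z - fderiv ℝ f x‖ ≤ C * ‖z - x‖ :=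
        hs.norm_image_sub_le_of_norm_fderiv_le (fun w _ => hf' w) bound hx
          (hs.segment_subset hx hy hz)
      _ ≤ C * ‖y - x‖ := by
        gcongr
        simpa [dist_eq_norm, norm_sub_rev] using segment_subset_closedBall_left x y hz
  calc ‖f y - f x - fderiv ℝ f x (y - x)‖ ≤ C * ‖y - x‖ * ‖y - x‖ :=
        (convex_segment x y).norm_image_sub_le_of_norm_fderiv_le'
          (fun w _ => hf.differentiable two_ne_zero w) hderiv
          (left_mem_segment ℝ x y) (right_mem_segment ℝ x y)
    _ = C * ‖y - x‖ ^ 2 := by ring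

theorem exists_norm_image_sub_sub_fderiv_le_sq_of_isCompact [ProperSpace F] {f : E × F → G}
    (hf : ContDiff ℝ 2 f) {K : Set E} (hK : IsCompact K) :
    ∃ C, 0 ≤ C ∧ ∀ x ∈ K, ∀ v : F, ‖v‖ ≤ 1 →
      ‖f (x, v) - f (x, 0) - fderiv ℝ f (x, 0) (0, v)‖ ≤ C * ‖v‖ ^ 2 := by
  obtain ⟨C, hC⟩ := (hK.prod (isCompact_closedBall (0 : F) 1)).exists_bound_of_continuousOn
    ((hf.fderiv_right (m := 1) le_rfl).continuous_fderiv one_ne_zero).continuousOn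
  refine ⟨max C 0, le_max_right _ _, fun x hx v hv => ?_⟩
  have hs : Convex ℝ ({x} ×ˢ closedBall (0 : F) 1) :=
    (convex_singleton x).prod (convex_closedBall 0 1)
  have htaylor := hs.norm_image_sub_sub_fderiv_le_sq hf
    (fun z hz => (hC z ⟨hz.1 ▸ hx, hz.2⟩).trans (le_max_left C 0))
    (mk_mem_prod rfl (mem_closedBall_self zero_le_one))
    (mk_mem_prod rfl (mem_closedBall_zero_iff.2 hv))
  simpa [Prod.norm_def] using htaylor

end Taylor

theorem norm_le_mul_and_norm_sub_le_mul_sq {E : Type*} [SeminormedAddCommGroup E] {u v : E}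
    {C D : ℝ} (hC : 0 ≤ C) (hu : ‖u‖ ≤ D) (hsmall : ‖v‖ ≤ 1 → ‖u - v‖ ≤ C * ‖v‖ ^ 2) :
    ‖u‖ ≤ (C + D + 1) * ‖v‖ ∧ ‖u - v‖ ≤ (C + D + 1) * ‖v‖ ^ 2 := by
  have hD : 0 ≤ D := (norm_nonneg u).trans hu
  have hsub := norm_sub_le u v
  have hle := norm_le_norm_sub_add u v
  rcases le_or_gt ‖v‖ 1 with hv | hv
  · have := hsmall hv
    constructor <;> nlinarith [norm_nonneg v]
  · have hv2 : 1 ≤ ‖v‖ ^ 2 := by nlinarith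
    constructor <;> nlinarith [mul_le_mul_of_nonneg_left hv2 hD, mul_nonneg hC (sq_nonneg ‖v‖)]

/-- retraction bounds: let `R X : T_X M → M` be a (twice
continuously differentiable) retraction on a compact embedded submanifold
`M ⊂ ℝⁿ`, i.e. `R X 0 = X`, `R X` maps tangent vectors into `M`, and the
differential of `R X` at `0` is the identity on `T_X M`.  Then there exist
constants `M₁, M₂ ≥ 0` such that for all `X ∈ M` and `η ∈ T_X M`:
`‖R_X(η) - X‖ ≤ M₁‖η‖` and `‖R_X(η) - (X + η)‖ ≤ M₂‖η‖²`. -/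
theorem retraction_first_and_second_order_bounds
    {n : ℕ} (M : Set (EuclideanSpace ℝ (Fin n))) (hM : IsCompact M)
    (T : EuclideanSpace ℝ (Fin n) → Submodule ℝ (EuclideanSpace ℝ (Fin n)))
    (R : EuclideanSpace ℝ (Fin n) → EuclideanSpace ℝ (Fin n) →
      EuclideanSpace ℝ (Fin n))
    (hsmooth : ContDiff ℝ 2 (fun p : EuclideanSpace ℝ (Fin n) ×
      EuclideanSpace ℝ (Fin n) => R p.1 p.2))
    (hR0 : ∀ X ∈ M, R X 0 = X)
    (hRmem : ∀ X ∈ M, ∀ η ∈ T X, R X η ∈ M)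
    -- the differential of `R X` at `0_X` is the identity on `T_X M`
    (hDR : ∀ X ∈ M, ∀ η ∈ T X, HasDerivAt (fun t : ℝ => R X (t • η)) η 0) :
    ∃ M₁ M₂ : ℝ, 0 ≤ M₁ ∧ 0 ≤ M₂ ∧ ∀ X ∈ M, ∀ η ∈ T X,
      ‖R X η - X‖ ≤ M₁ * ‖η‖ ∧ ‖R X η - (X + η)‖ ≤ M₂ * ‖η‖ ^ 2 := by
  obtain ⟨C, hC, htaylor⟩ := exists_norm_image_sub_sub_fderiv_le_sq_of_isCompact hsmooth hM
  have hquad : ∀ X ∈ M, ∀ η ∈ T X, ‖η‖ ≤ 1 → ‖R X η - X - η‖ ≤ C * ‖η‖ ^ 2 := by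
    intro X hX η hη hη1
    have hline : HasLineDerivAt ℝ (fun p => R p.1 p.2) η (X, 0) (0, η) := by
      simpa [HasLineDerivAt] using hDR X hX η hη
    have hDR0 : fderiv ℝ (fun p => R p.1 p.2) (X, 0) (0, η) = η := by
      rw [← (hsmooth.differentiable two_ne_zero _).lineDeriv_eq_fderiv, hline.lineDeriv]
    simpa [hR0 X hX, hDR0] using htaylor X hX η hη1
  refine ⟨C + diam M + 1, C + diam M + 1, by positivity, by positivity, fun X hX η hη => ?_⟩
  rw [← sub_sub]
  refine norm_le_mul_and_norm_sub_le_mul_sq hC ?_ (hquad X hX η hη)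
  simpa [dist_eq_norm] using dist_le_diam_of_mem hM.isBounded (hRmem X hX η hη) hX
end
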